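/- arXiv:1512.04668 — 5 statements merged into one kernel-verified Lean document; each statement's English description precedes it below -/
import Mathlib

section
/- Let n ≥ 2, let κ = (κ₁,…,κₙ) be a circulation with all κⱼ ∈ ℝ nonzero, and let Z ∈ DV, ω ∈ ℂ with Re(ω) ≠ 0 and z₀ ∈ ℂ satisfy V_j(Z) = ω(Z_j − z₀) for all j. Then the curve z(t) = z₀ + √(2·Re(ω)·t + 1) · exp(i·(Im(ω)/(2·Re(ω)))·ln(2·Re(ω)·t + 1)) · (Z − z₀) (acting componentwise on Z − z₀) satisfies z(0) = Z, takes values in DV, and solves z′(t) = V(z(t)) for all real t with 2·Re(ω)·t + 1 > 0. -/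
/-!
The vector field is homogeneous of degree `-1` in the sense `V(z₀ + λ (z − z₀)) = (conj λ)⁻¹ V(z)`.
So if `V(Z) = ω (Z − z₀)`, the ansatz `z(t) = z₀ + λ(t) (Z − z₀)` solves `z′ = V(z)` as soon as
the scalar ODE `λ′ = ω / conj λ`, `λ(0) = 1` holds. Since `λ′ conj λ` is then `ω`, its real part
gives `|λ|² = 2 Re(ω) t + 1`, and `λ = exp((ω / (2 Re ω)) · log(2 Re(ω) t + 1))` solves it; this is
the given curve.
-/

/-- The point-vortex vector field `V` for circulation `κ`:
`V_j(z) = i · Σ_{k ≠ j} κ_k · (z_j − z_k) / |z_j − z_k|²`. -/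
noncomputable def vortexField {n : ℕ} (κ : Fin n → ℝ) (z : Fin n → ℂ) (j : Fin n) : ℂ :=
  Complex.I * ∑ k ∈ Finset.univ.erase j,
    (κ k : ℂ) * (z j - z k) / ((‖z j - z k‖ : ℝ) : ℂ) ^ 2

/-- Membership in the phase space `DV`: all vortex positions are pairwise distinct. -/
def memDV {n : ℕ} (z : Fin n → ℂ) : Prop := ∀ j k : Fin n, j ≠ k → z j ≠ z k

open Complex ComplexConjugate

theorem memDV.homothety {n : ℕ} {z : Fin n → ℂ} (hz : memDV z) (z₀ : ℂ) {c : ℂ} (hc : c ≠ 0) :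
    memDV fun k => z₀ + c * (z k - z₀) := fun j k hjk h =>
  hz j k hjk (by simpa [hc, sub_left_inj] using h)

theorem vortexField_homothety {n : ℕ} (κ : Fin n → ℝ) (z : Fin n → ℂ) (z₀ c : ℂ) (j : Fin n) :
    vortexField κ (fun k => z₀ + c * (z k - z₀)) j = (conj c)⁻¹ * vortexField κ z j := by
  have hinv : (conj c)⁻¹ = c / ((‖c‖ : ℝ) : ℂ) ^ 2 := by
    rw [inv_def, conj_conj, normSq_conj, normSq_eq_norm_sq]
    push_cast
    ring
  simp only [vortexField, hinv, Finset.mul_sum]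
  refine Finset.sum_congr rfl fun k _ => ?_
  rw [show z₀ + c * (z j - z₀) - (z₀ + c * (z k - z₀)) = c * (z j - z k) by ring, norm_mul]
  push_cast
  ring

noncomputable def collapseFactor (ω : ℂ) (t : ℝ) : ℂ :=
  ((Real.sqrt (2 * ω.re * t + 1) : ℝ) : ℂ) *
    exp (I * ((ω.im / (2 * ω.re) : ℝ) : ℂ) * ((Real.log (2 * ω.re * t + 1) : ℝ) : ℂ))

section collapseFactor

variable {ω : ℂ} {t : ℝ}

@[simp]
theorem collapseFactor_zero (ω : ℂ) : collapseFactor ω 0 = 1 := by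
  simp [collapseFactor]

theorem norm_collapseFactor : ‖collapseFactor ω t‖ = Real.sqrt (2 * ω.re * t + 1) := by
  rw [collapseFactor, norm_mul, norm_real, Real.norm_of_nonneg (Real.sqrt_nonneg _), norm_exp]
  simp only [mul_re, mul_im, I_re, I_im, ofReal_re, ofReal_im]
  simp

theorem collapseFactor_ne_zero (ht : 0 < 2 * ω.re * t + 1) : collapseFactor ω t ≠ 0 := by
  rw [← norm_pos_iff, norm_collapseFactor]
  exact Real.sqrt_pos.2 ht

theorem collapseFactor_mul_conj (ht : 0 < 2 * ω.re * t + 1) :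
    collapseFactor ω t * conj (collapseFactor ω t) = ((2 * ω.re * t + 1 : ℝ) : ℂ) := by
  rw [mul_conj, normSq_eq_norm_sq, norm_collapseFactor, Real.sq_sqrt ht.le]

theorem collapseFactor_eq_cexp (hω : ω.re ≠ 0) (ht : 0 < 2 * ω.re * t + 1) :
    collapseFactor ω t = exp (ω / (2 * ω.re) * Real.log (2 * ω.re * t + 1)) := by
  have hsqrt : Real.sqrt (2 * ω.re * t + 1) = Real.exp (Real.log (2 * ω.re * t + 1) / 2) := by
    rw [Real.sqrt_eq_rpow, Real.rpow_def_of_pos ht, mul_one_div]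
  have hexponent : ω / (2 * ω.re) = 1 / 2 + I * ((ω.im / (2 * ω.re) : ℝ) : ℂ) := by
    have hre : (ω.re : ℂ) ≠ 0 := ofReal_ne_zero.2 hω
    nth_rewrite 1 [← re_add_im ω]
    push_cast
    field_simp
  rw [collapseFactor, hsqrt, ofReal_exp, ← exp_add, hexponent]
  push_cast
  congr 1
  ring

theorem hasDerivAt_collapseFactor (hω : ω.re ≠ 0) (ht : 0 < 2 * ω.re * t + 1) :
    HasDerivAt (collapseFactor ω) (ω / conj (collapseFactor ω t)) t := by
  have hlin : HasDerivAt (fun t : ℝ => 2 * ω.re * t + 1) (2 * ω.re) t := by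
    simpa using ((hasDerivAt_id t).const_mul (2 * ω.re)).add_const 1
  have hexp := (((hlin.log ht.ne').ofReal_comp).const_mul (ω / (2 * ω.re))).cexp
  have heq : (fun t => exp (ω / (2 * ω.re) * Real.log (2 * ω.re * t + 1))) =ᶠ[nhds t]
      collapseFactor ω := by
    filter_upwards [hlin.continuousAt.eventually (eventually_gt_nhds ht)] with s hs
    exact (collapseFactor_eq_cexp hω hs).symm
  refine (hexp.congr_of_eventuallyEq heq.symm).congr_deriv ?_
  have hconj : conj (collapseFactor ω t) = ((2 * ω.re * t + 1 : ℝ) : ℂ) / collapseFactor ω t :=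
    eq_div_of_mul_eq (collapseFactor_ne_zero ht) (by rw [mul_comm, collapseFactor_mul_conj ht])
  have hre : (ω.re : ℂ) ≠ 0 := ofReal_ne_zero.2 hω
  have hs : ((2 * ω.re * t + 1 : ℝ) : ℂ) ≠ 0 := ofReal_ne_zero.2 ht.ne'
  rw [← collapseFactor_eq_cexp hω ht, hconj]
  push_cast at hs ⊢
  field_simp

end collapseFactor

theorem collapsing_evolution_general {n : ℕ} (κ : Fin n → ℝ)
    (Z : Fin n → ℂ) (hZ : memDV Z) (ω z₀ : ℂ) (hω : ω.re ≠ 0)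
    (hV : ∀ j, vortexField κ Z j = ω * (Z j - z₀))
    (z : ℝ → Fin n → ℂ)
    (hz : ∀ t j, z t j = z₀ +
      ((Real.sqrt (2 * ω.re * t + 1) : ℝ) : ℂ) *
        Complex.exp (Complex.I * ((ω.im / (2 * ω.re) : ℝ) : ℂ) *
          ((Real.log (2 * ω.re * t + 1) : ℝ) : ℂ)) * (Z j - z₀)) :
    (∀ j, z 0 j = Z j) ∧
    (∀ t : ℝ, 2 * ω.re * t + 1 > 0 → memDV (z t)) ∧
    (∀ t : ℝ, 2 * ω.re * t + 1 > 0 →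
      ∀ j, HasDerivAt (fun s => z s j) (vortexField κ (z t) j) t) := by
  have hz' : ∀ t, z t = fun j => z₀ + collapseFactor ω t * (Z j - z₀) := fun t => funext (hz t)
  refine ⟨fun j => by simp [hz'], fun t ht => ?_, fun t ht j => ?_⟩
  · rw [hz']
    exact hZ.homothety z₀ (collapseFactor_ne_zero ht)
  · simp only [hz']
    rw [vortexField_homothety, hV]
    exact (((hasDerivAt_collapseFactor hω ht).mul_const (Z j - z₀)).const_add z₀).congr_deriv
      (by ring)

/-- if `V_j(Z) = ω (Z_j − z₀)` with `Re ω ≠ 0`, then the curve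
`z(t) = z₀ + √(2·Re ω·t + 1) · exp(i·(Im ω/(2 Re ω))·ln(2·Re ω·t + 1)) · (Z − z₀)`
satisfies `z(0) = Z`, stays in `DV`, and solves `z′ = V(z)` wherever `2·Re ω·t + 1 > 0`. -/
theorem collapsing_evolution {n : ℕ} (hn : 2 ≤ n) (κ : Fin n → ℝ) (hκ : ∀ j, κ j ≠ 0)
    (Z : Fin n → ℂ) (hZ : memDV Z) (ω z₀ : ℂ) (hω : ω.re ≠ 0)
    (hV : ∀ j, vortexField κ Z j = ω * (Z j - z₀))
    (z : ℝ → Fin n → ℂ)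
    (hz : ∀ t j, z t j = z₀ +
      ((Real.sqrt (2 * ω.re * t + 1) : ℝ) : ℂ) *
        Complex.exp (Complex.I * ((ω.im / (2 * ω.re) : ℝ) : ℂ) *
          ((Real.log (2 * ω.re * t + 1) : ℝ) : ℂ)) * (Z j - z₀)) :
    (∀ j, z 0 j = Z j) ∧
    (∀ t : ℝ, 2 * ω.re * t + 1 > 0 → memDV (z t)) ∧
    (∀ t : ℝ, 2 * ω.re * t + 1 > 0 →
      ∀ j, HasDerivAt (fun s => z s j) (vortexField κ (z t) j) t) :=
  collapsing_evolution_general κ Z hZ ω z₀ hω hV z hz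
end

section
/- Let n ≥ 2, let κ = (κ₁,…,κₙ) be a circulation with all κⱼ ∈ ℝ nonzero, let Z ∈ DV, and write V_j = V_j(Z). Then there exists ω ∈ ℂ with V_k − V_j = ω(Z_k − Z_j) for all j, k if and only if exactly one of the following holds: (i) V_j = 0 for all j (Z is a fixed point); (ii) there exists v ∈ ℂ, v ≠ 0, with V_j = v for all j (Z is translational); (iii) there exist λ ∈ ℝ∖{0} and z₀ ∈ ℂ with V_j = i·λ·(Z_j − z₀) for all j (Z is rotational); (iv) there exist ω ∈ ℂ with Re(ω) ≠ 0 and z₀ ∈ ℂ with V_j = ω·(Z_j − z₀) for all j (Z is collapsing). -/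
/-- `Z` is a fixed point: all velocities vanish. -/
noncomputable def isFixed {n : ℕ} (κ : Fin n → ℝ) (Z : Fin n → ℂ) : Prop :=
  ∀ j, vortexField κ Z j = 0

/-- `Z` is translational: all velocities equal a common nonzero `v`. -/
noncomputable def isTranslational {n : ℕ} (κ : Fin n → ℝ) (Z : Fin n → ℂ) : Prop :=
  ∃ v : ℂ, v ≠ 0 ∧ ∀ j, vortexField κ Z j = v

/-- `Z` is rotational: `V_j = i·λ·(Z_j − z₀)` with `λ ∈ ℝ∖{0}`. -/
noncomputable def isRotational {n : ℕ} (κ : Fin n → ℝ) (Z : Fin n → ℂ) : Prop :=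
  ∃ lam : ℝ, lam ≠ 0 ∧ ∃ z₀ : ℂ, ∀ j, vortexField κ Z j = Complex.I * (lam : ℂ) * (Z j - z₀)

/-- `Z` is collapsing: `V_j = ω·(Z_j − z₀)` with `Re ω ≠ 0`. -/
noncomputable def isCollapsing {n : ℕ} (κ : Fin n → ℝ) (Z : Fin n → ℂ) : Prop :=
  ∃ ω : ℂ, ω.re ≠ 0 ∧ ∃ z₀ : ℂ, ∀ j, vortexField κ Z j = ω * (Z j - z₀)

/-! Self-similarity says exactly that the velocities are the values at the vortex positions of an
affine field `z ↦ a z + c`. As soon as two positions differ, `a` and `c` are determined by `V`,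
and the four types are the four cases `a = c = 0`, `a = 0 ≠ c`, `a ∈ iℝ ∖ {0}` and `Re a ≠ 0`. -/

def IsAffineIn {ι : Type*} (V Z : ι → ℂ) (a c : ℂ) : Prop := ∀ j, V j = a * Z j + c

section Affine

variable {ι : Type*} {V Z : ι → ℂ} {a b c d : ℂ}

theorem isAffineIn_of_sub_eq_mul_sub {ω : ℂ} (j₀ : ι)
    (h : ∀ j k, V k - V j = ω * (Z k - Z j)) : IsAffineIn V Z ω (V j₀ - ω * Z j₀) :=
  fun j => by linear_combination h j₀ j

theorem IsAffineIn.sub_eq_mul_sub (h : IsAffineIn V Z a c) (j k : ι) :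
    V k - V j = a * (Z k - Z j) := by
  rw [h j, h k]; ring

theorem IsAffineIn.unique {j k : ι} (hjk : Z j ≠ Z k) (h₁ : IsAffineIn V Z a c)
    (h₂ : IsAffineIn V Z b d) : a = b ∧ c = d := by
  have hab : (a - b) * (Z j - Z k) = 0 := by
    linear_combination h₂ j - h₂ k - h₁ j + h₁ k
  have hab : a = b := sub_eq_zero.mp ((mul_eq_zero.mp hab).resolve_right (sub_ne_zero.mpr hjk))
  exact ⟨hab, by linear_combination h₂ j - h₁ j - Z j * hab⟩

theorem IsAffineIn.exists_and_iff {j k : ι} (hjk : Z j ≠ Z k) (h : IsAffineIn V Z a c)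
    (C : ℂ → ℂ → Prop) : (∃ b d, C b d ∧ IsAffineIn V Z b d) ↔ C a c := by
  refine ⟨?_, fun hC => ⟨a, c, hC, h⟩⟩
  rintro ⟨b, d, hC, h'⟩
  obtain ⟨rfl, rfl⟩ := h.unique hjk h'
  exact hC

theorem exists_eq_mul_sub_iff_exists_isAffineIn {C : ℂ → Prop} (hC : ∀ a, C a → a ≠ 0) :
    (∃ a, C a ∧ ∃ z₀, ∀ j, V j = a * (Z j - z₀)) ↔ ∃ a c, C a ∧ IsAffineIn V Z a c := by
  refine exists_congr fun a => ?_
  rw [exists_and_left]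
  refine and_congr_right fun ha => ⟨?_, ?_⟩
  · rintro ⟨z₀, h⟩
    exact ⟨-(a * z₀), fun j => by rw [h j]; ring⟩
  · rintro ⟨c, h⟩
    refine ⟨-(c / a), fun j => ?_⟩
    rw [h j, mul_sub, mul_neg, mul_div_cancel₀ c (hC a ha)]
    ring

end Affine

section Types

variable {n : ℕ} {κ : Fin n → ℝ} {Z : Fin n → ℂ}

theorem isFixed_iff :
    isFixed κ Z ↔ ∃ a c, (a = 0 ∧ c = 0) ∧ IsAffineIn (vortexField κ Z) Z a c := by
  simp [isFixed, IsAffineIn]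

theorem isTranslational_iff :
    isTranslational κ Z ↔ ∃ a c, (a = 0 ∧ c ≠ 0) ∧ IsAffineIn (vortexField κ Z) Z a c := by
  simp [isTranslational, IsAffineIn]

theorem isRotational_iff :
    isRotational κ Z ↔ ∃ a c, (a ≠ 0 ∧ a.re = 0) ∧ IsAffineIn (vortexField κ Z) Z a c := by
  rw [← exists_eq_mul_sub_iff_exists_isAffineIn fun _ ha => ha.1]
  constructor
  · rintro ⟨lam, hlam, h⟩
    exact ⟨Complex.I * lam, ⟨by simpa using hlam, by simp⟩, h⟩
  · rintro ⟨a, ⟨ha, hre⟩, h⟩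
    have hI : Complex.I * a.im = a := by
      rw [mul_comm]
      simpa [hre] using Complex.re_add_im a
    refine ⟨a.im, fun him => ha ?_, by rwa [hI]⟩
    rw [← hI, him]
    simp

theorem isCollapsing_iff :
    isCollapsing κ Z ↔ ∃ a c, a.re ≠ 0 ∧ IsAffineIn (vortexField κ Z) Z a c :=
  exists_eq_mul_sub_iff_exists_isAffineIn fun _ hre ha => hre (by simp [ha])

end Types

theorem memDV.exists_ne {n : ℕ} {Z : Fin n → ℂ} (hn : 2 ≤ n) (hZ : memDV Z) :
    ∃ j k, Z j ≠ Z k :=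
  ⟨⟨0, by omega⟩, ⟨1, by omega⟩, hZ _ _ (by simp [Fin.ext_iff])⟩

theorem selfSimilar_iff_types_general {n : ℕ} (hn : 2 ≤ n) (κ : Fin n → ℝ)
    (Z : Fin n → ℂ) (hZ : memDV Z) :
    (∃ ω : ℂ, ∀ j k : Fin n,
        vortexField κ Z k - vortexField κ Z j = ω * (Z k - Z j)) ↔
    ((isFixed κ Z ∧ ¬ isTranslational κ Z ∧ ¬ isRotational κ Z ∧ ¬ isCollapsing κ Z) ∨
     (¬ isFixed κ Z ∧ isTranslational κ Z ∧ ¬ isRotational κ Z ∧ ¬ isCollapsing κ Z) ∨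
     (¬ isFixed κ Z ∧ ¬ isTranslational κ Z ∧ isRotational κ Z ∧ ¬ isCollapsing κ Z) ∨
     (¬ isFixed κ Z ∧ ¬ isTranslational κ Z ∧ ¬ isRotational κ Z ∧ isCollapsing κ Z)) := by
  obtain ⟨j, k, hjk⟩ := hZ.exists_ne hn
  rw [isFixed_iff, isTranslational_iff, isRotational_iff, isCollapsing_iff]
  constructor
  · rintro ⟨ω, hω⟩
    have hA := isAffineIn_of_sub_eq_mul_sub j hω
    simp only [hA.exists_and_iff hjk]
    by_cases hω₀ : ω = 0
    · simp [hω₀, em]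
    · by_cases hre : ω.re = 0 <;> simp [hω₀, hre]
  · rintro (⟨⟨a, c, -, h⟩, -⟩ | ⟨-, ⟨a, c, -, h⟩, -⟩ | ⟨-, -, ⟨a, c, -, h⟩, -⟩ |
      ⟨-, -, -, a, c, -, h⟩) <;>
    exact ⟨a, h.sub_eq_mul_sub⟩

/-- `Z` is self-similar (there is `ω ∈ ℂ` with
`V_k − V_j = ω(Z_k − Z_j)` for all `j, k`) iff exactly one of the four
mutually exclusive types holds: fixed, translational, rotational, collapsing. -/
theorem selfSimilar_iff_types {n : ℕ} (hn : 2 ≤ n) (κ : Fin n → ℝ) (hκ : ∀ j, κ j ≠ 0)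
    (Z : Fin n → ℂ) (hZ : memDV Z) :
    (∃ ω : ℂ, ∀ j k : Fin n,
        vortexField κ Z k - vortexField κ Z j = ω * (Z k - Z j)) ↔
    ((isFixed κ Z ∧ ¬ isTranslational κ Z ∧ ¬ isRotational κ Z ∧ ¬ isCollapsing κ Z) ∨
     (¬ isFixed κ Z ∧ isTranslational κ Z ∧ ¬ isRotational κ Z ∧ ¬ isCollapsing κ Z) ∨
     (¬ isFixed κ Z ∧ ¬ isTranslational κ Z ∧ isRotational κ Z ∧ ¬ isCollapsing κ Z) ∨
     (¬ isFixed κ Z ∧ ¬ isTranslational κ Z ∧ ¬ isRotational κ Z ∧ isCollapsing κ Z)) :=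
  selfSimilar_iff_types_general hn κ Z hZ
end

section
/- Fix n ≥ 3 and a circulation κ = (κ₁,…,κₙ) with all κⱼ ∈ ℝ nonzero. For w = (w₁,…,w_{n−2}) ∈ DU, the system of n vortices z = (w₁,…,w_{n−2},1,0) ∈ DV is self-similar if and only if U_k(w) = 0 for all k = 1,…,n−2. -/
/-- Membership in `DU`: all coordinates differ from `0` and `1` and are pairwise
distinct. -/
def memDU {m : ℕ} (w : Fin m → ℂ) : Prop :=
  (∀ k, w k ≠ 0 ∧ w k ≠ 1) ∧ ∀ j k : Fin m, j ≠ k → w j ≠ w k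

/-- The vector field `U` on `DU` for a circulation `κ = (κ₁,…,κ_{m+2})` of `n = m + 2`
vortices (paper indices: `κ_k` for `k ≤ n−2`, `κ_{n−1}`, `κ_n`). -/
noncomputable def uField {m : ℕ} (κ : Fin (m + 2) → ℝ) (w : Fin m → ℂ) (k : Fin m) : ℂ :=
  ((κ (k.castAdd 2) : ℂ) + (κ (Fin.last (m + 1)) : ℂ)) * w k
      / ((‖w k‖ : ℝ) : ℂ) ^ 2
  + (κ ⟨m, by omega⟩ : ℂ) * (1 + (w k - 1) / ((‖w k - 1‖ : ℝ) : ℂ) ^ 2)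
  - w k * (κ (k.castAdd 2) : ℂ) *
      ((1 - w k) / ((‖1 - w k‖ : ℝ) : ℂ) ^ 2
        + w k / ((‖w k‖ : ℝ) : ℂ) ^ 2)
  - w k * ((κ ⟨m, by omega⟩ : ℂ) + (κ (Fin.last (m + 1)) : ℂ))
  + ∑ j ∈ Finset.univ.erase k, (κ (j.castAdd 2) : ℂ) *
      ((w k - w j) / ((‖w k - w j‖ : ℝ) : ℂ) ^ 2
        + w j / ((‖w j‖ : ℝ) : ℂ) ^ 2
        - w k * ((1 - w j) / ((‖1 - w j‖ : ℝ) : ℂ) ^ 2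
            + w j / ((‖w j‖ : ℝ) : ℂ) ^ 2))

/-- The extension of `w ∈ DU ⊆ ℂ^{n−2}` to the system `(w₁,…,w_{n−2},1,0) ∈ ℂⁿ`
of `n = m + 2` vortices. -/
noncomputable def extendSystem {m : ℕ} (w : Fin m → ℂ) (i : Fin (m + 2)) : ℂ :=
  if h : (i : ℕ) < m then w ⟨i, h⟩ else if (i : ℕ) = m then 1 else 0

/-! Put `z = (w₁,…,w_{n−2},1,0)`. Since `z_n = 0` and `z_{n−1} = 1`, the only candidate for the
rate `ω` of a self-similar motion is `V_{n−1} − V_n`, and self-similarity says exactly that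
`V_k − V_n = (V_{n−1} − V_n) w_k` for every `k ≤ n − 2`. The field `U` is built so that
`i U_k(w) = (V_k − V_n) − w_k (V_{n−1} − V_n)`, a rational identity between the defining sums. -/

theorem exists_sub_eq_mul_sub_iff {ι R : Type*} [CommRing R] (f z : ι → R) {a b : ι}
    (ha : z a = 1) (hb : z b = 0) :
    (∃ ω : R, ∀ j k, f k - f j = ω * (z k - z j)) ↔ ∀ i, f i - f b = (f a - f b) * z i := by
  constructor
  · rintro ⟨ω, hω⟩ i
    have hω_eq : ω = f a - f b := by simpa [ha, hb] using (hω b a).symm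
    simpa [hb, hω_eq] using hω b i
  · exact fun h => ⟨f a - f b, fun j k => by linear_combination h k - h j⟩

lemma vortexField_eq_sum_univ {n : ℕ} (κ : Fin n → ℝ) (z : Fin n → ℂ) (j : Fin n) :
    vortexField κ z j =
      Complex.I * ∑ k, (κ k : ℂ) * (z j - z k) / ((‖z j - z k‖ : ℝ) : ℂ) ^ 2 := by
  rw [vortexField, Finset.sum_erase]
  simp

section extendSystem

variable {m : ℕ} (w : Fin m → ℂ)

@[simp]
lemma extendSystem_castAdd (j : Fin m) : extendSystem w (j.castAdd 2) = w j := by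
  simp [extendSystem]

@[simp]
lemma extendSystem_penultimate : extendSystem w ⟨m, by omega⟩ = 1 := by
  simp [extendSystem]

@[simp]
lemma extendSystem_last : extendSystem w (Fin.last (m + 1)) = 0 := by
  simp [extendSystem, Fin.last]

lemma sum_fin_add_two {M : Type*} [AddCommMonoid M] (f : Fin (m + 2) → M) :
    ∑ i, f i = ∑ j : Fin m, f (j.castAdd 2) + f ⟨m, by omega⟩ + f (Fin.last (m + 1)) := by
  rw [Fin.sum_univ_castSucc, Fin.sum_univ_castSucc]
  rfl

end extendSystem

lemma I_mul_uField {m : ℕ} (κ : Fin (m + 2) → ℝ) (w : Fin m → ℂ) (k : Fin m) :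
    Complex.I * uField κ w k =
      (vortexField κ (extendSystem w) (k.castAdd 2)
        - vortexField κ (extendSystem w) (Fin.last (m + 1)))
      - w k * (vortexField κ (extendSystem w) ⟨m, by omega⟩
        - vortexField κ (extendSystem w) (Fin.last (m + 1))) := by
  simp only [vortexField_eq_sum_univ, sum_fin_add_two, extendSystem_castAdd,
    extendSystem_penultimate, extendSystem_last, zero_sub, sub_zero, sub_self, norm_neg,
    norm_one, norm_zero, Complex.ofReal_one, Complex.ofReal_zero]
  have h_sum : (∑ j : Fin m, (κ (j.castAdd 2) : ℂ) *
      ((w k - w j) / ((‖w k - w j‖ : ℝ) : ℂ) ^ 2 + w j / ((‖w j‖ : ℝ) : ℂ) ^ 2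
        - w k * ((1 - w j) / ((‖1 - w j‖ : ℝ) : ℂ) ^ 2 + w j / ((‖w j‖ : ℝ) : ℂ) ^ 2))) =
      ∑ j : Fin m, (κ (j.castAdd 2) : ℂ) * (w k - w j) / ((‖w k - w j‖ : ℝ) : ℂ) ^ 2
      - ∑ j : Fin m, (κ (j.castAdd 2) : ℂ) * -w j / ((‖w j‖ : ℝ) : ℂ) ^ 2
      - w k * (∑ j : Fin m, (κ (j.castAdd 2) : ℂ) * (1 - w j) / ((‖1 - w j‖ : ℝ) : ℂ) ^ 2
        - ∑ j : Fin m, (κ (j.castAdd 2) : ℂ) * -w j / ((‖w j‖ : ℝ) : ℂ) ^ 2) := by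
    rw [← Finset.sum_sub_distrib, ← Finset.sum_sub_distrib, Finset.mul_sum,
      ← Finset.sum_sub_distrib]
    exact Finset.sum_congr rfl fun j _ => by ring
  rw [uField, Finset.sum_erase_eq_sub (Finset.mem_univ k), h_sum]
  ring

lemma uField_eq_zero_iff {m : ℕ} (κ : Fin (m + 2) → ℝ) (w : Fin m → ℂ) (k : Fin m) :
    uField κ w k = 0 ↔
      vortexField κ (extendSystem w) (k.castAdd 2)
        - vortexField κ (extendSystem w) (Fin.last (m + 1)) =
      (vortexField κ (extendSystem w) ⟨m, by omega⟩
        - vortexField κ (extendSystem w) (Fin.last (m + 1))) * w k := by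
  rw [← mul_right_inj' Complex.I_ne_zero, I_mul_uField, mul_zero, sub_eq_zero, mul_comm (w k)]

theorem selfSimilar_iff_uField_zero_general {m : ℕ} (κ : Fin (m + 2) → ℝ) (w : Fin m → ℂ) :
    (∃ ω : ℂ, ∀ j k : Fin (m + 2),
        vortexField κ (extendSystem w) k - vortexField κ (extendSystem w) j =
          ω * (extendSystem w k - extendSystem w j)) ↔
    ∀ k : Fin m, uField κ w k = 0 := by
  rw [exists_sub_eq_mul_sub_iff _ _ (extendSystem_penultimate w) (extendSystem_last w),
    Fin.forall_fin_add, Fin.forall_fin_two,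
    show Fin.natAdd m (0 : Fin 2) = ⟨m, by omega⟩ from rfl,
    show Fin.natAdd m (1 : Fin 2) = Fin.last (m + 1) from rfl]
  simp [uField_eq_zero_iff]

/-- for `w ∈ DU`, the system of `n = m + 2 ≥ 3` vortices
`z = (w₁,…,w_{n−2},1,0)` is self-similar iff `U_k(w) = 0` for all `k`. -/
theorem selfSimilar_iff_uField_zero {m : ℕ} (hm : 1 ≤ m)
    (κ : Fin (m + 2) → ℝ) (hκ : ∀ j, κ j ≠ 0)
    (w : Fin m → ℂ) (hw : memDU w) :
    (∃ ω : ℂ, ∀ j k : Fin (m + 2),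
        vortexField κ (extendSystem w) k - vortexField κ (extendSystem w) j =
          ω * (extendSystem w k - extendSystem w j)) ↔
    ∀ k : Fin m, uField κ w k = 0 :=
  selfSimilar_iff_uField_zero_general κ w
end

section
/- Let λ ∈ ℝ with λ ≠ 0 and λ ≠ 1, and consider the circulation κ = (−1, λ, λ/(λ−1)) for n = 3 vortices. Then the system Z = (1/λ, 1, 0) ∈ DV is a fixed point: V_j(Z) = 0 for j = 1, 2, 3. -/
/-!
For vortices on the real line, `(x_j - x_k) / |x_j - x_k|² = 1 / (x_j - x_k)`, so
`V_j = i · Σ_k κ_k / (x_j - x_k)`, where the term `k = j` may be added since it is `κ_j / 0 = 0`.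
For `κ = (-1, λ, λ/(λ-1))` and `x = (1/λ, 1, 0)` these three real sums are
`λ²/(1-λ) + λ²/(λ-1)`, `-λ/(λ-1) + λ/(λ-1)` and `λ - λ`.
-/

open Complex Finset

lemma mul_ofReal_div_norm_sq (c : ℂ) (r : ℝ) :
    c * r / ((‖(r : ℂ)‖ : ℝ) : ℂ) ^ 2 = c / r := by
  rw [norm_real, Real.norm_eq_abs, ← ofReal_pow, sq_abs, ofReal_pow, sq, mul_div_assoc,
    div_self_mul_self', div_eq_mul_inv]

theorem vortexField_ofReal {n : ℕ} (κ x : Fin n → ℝ) (j : Fin n) :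
    vortexField κ (fun k => x k) j = I * ((∑ k, κ k / (x j - x k) : ℝ) : ℂ) := by
  rw [vortexField, ← sum_erase univ (f := fun k => κ k / (x j - x k)) (a := j) (by simp),
    ofReal_sum]
  congr 1
  refine sum_congr rfl fun k _ => ?_
  rw [← ofReal_sub, mul_ofReal_div_norm_sq]
  push_cast
  rfl

theorem three_vortex_collinear_balance {lam : ℝ} (h0 : lam ≠ 0) (j : Fin 3) :
    ∑ k, ![-1, lam, lam / (lam - 1)] k / (![1 / lam, 1, 0] j - ![1 / lam, 1, 0] k) = 0 := by
  fin_cases j <;>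
    simp only [Fin.sum_univ_three, Fin.zero_eta, Fin.mk_one, Fin.reduceFinMk, Matrix.cons_val] <;>
    grind

theorem three_vortex_fixed_point_general (lam : ℝ) (h0 : lam ≠ 0) :
    ∀ j : Fin 3,
      vortexField ![-1, lam, lam / (lam - 1)] ![1 / (lam : ℂ), 1, 0] j = 0 := by
  have hZ : ![1 / (lam : ℂ), 1, 0] = fun k => ((![1 / lam, 1, 0] k : ℝ) : ℂ) := by
    ext k
    fin_cases k <;> simp
  intro j
  rw [hZ, vortexField_ofReal, three_vortex_collinear_balance h0 j, ofReal_zero, mul_zero]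

/-- for the circulation `κ = (−1, λ, λ/(λ−1))` (`λ ≠ 0, 1`) of three
vortices, the system `Z = (1/λ, 1, 0)` is a fixed point: `V_j(Z) = 0` for all `j`. -/
theorem three_vortex_fixed_point (lam : ℝ) (h0 : lam ≠ 0) (h1 : lam ≠ 1) :
    ∀ j : Fin 3,
      vortexField ![-1, lam, lam / (lam - 1)] ![1 / (lam : ℂ), 1, 0] j = 0 :=
  three_vortex_fixed_point_general lam h0
end

section
/- Let λ = −(2 + √3) and consider the circulation κ = (1, λ, λ, 1) for n = 4 vortices. For every w ∈ ℂ with |w − √3|² = 2, the parallelogram system Z = (w + 1, w, 1, 0) lies in DV and is self-similar: there exists ω ∈ ℂ such that V_k(Z) − V_j(Z) = ω(Z_k − Z_j) for all j, k. -/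
/-!
Write `V_j = i · conj W_j` with `W_j = Σ_k κ_k / (z_j - z_k)`. Both the parallelogram and the
circulation `(1, λ, λ, 1)` are invariant under the point reflection about `(w + 1) / 2`, which
swaps the vortices `0 ↔ 3`, `1 ↔ 2` and negates the velocities; hence
`V = (V₀, V₁, -V₁, -V₀)`, and the system is self-similar with `ω = V₀ - V₁` as soon as
`V₀ (w - 1) = V₁ (w + 1)`. Clearing denominators, this balance reads
`(w - 1)(w̄ - 1)(λ(w + 1)² + w) = (w + 1)(w̄ + 1)(λw - (w - 1)²)`.
On the circle `w w̄ = √3 (w + w̄) - 1`, so `(w ∓ 1)(w̄ ∓ 1) = (√3 ∓ 1)(w + w̄)`, and the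
remaining identity `(√3 - 1)(λ(w + 1)² + w) = (√3 + 1)(λw - (w - 1)²)` holds because
`(λ + 2)² = 3`.
-/

open Complex ComplexConjugate Finset

def IsSelfSimilar {n : ℕ} (κ : Fin n → ℝ) (z : Fin n → ℂ) : Prop :=
  ∃ ω : ℂ, ∀ j k : Fin n, vortexField κ z k - vortexField κ z j = ω * (z k - z j)

section General

variable {n : ℕ} {κ : Fin n → ℝ} {z : Fin n → ℂ}

theorem isSelfSimilar_of_eq_affine (ω c : ℂ) (h : ∀ k, vortexField κ z k = ω * z k + c) :
    IsSelfSimilar κ z :=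
  ⟨ω, fun j k => by rw [h j, h k]; ring⟩

-- The diagonal term is `κ j / 0 = 0`, so the sum may run over all of `Fin n`.
theorem vortexField_eq_I_mul_conj_sum (j : Fin n) :
    vortexField κ z j = I * conj (∑ k, (κ k : ℂ) / (z j - z k)) := by
  rw [vortexField, ← sum_erase_add _ _ (mem_univ j), sub_self, div_zero, add_zero, map_sum]
  congr 1
  refine sum_congr rfl fun k _ => ?_
  rw [map_div₀, conj_ofReal, ← ofReal_pow, Complex.sq_norm, ← mul_conj]
  rcases eq_or_ne (z j - z k) 0 with hjk | hjk
  · simp [hjk]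
  · rw [mul_div_assoc, div_mul_cancel_left₀ hjk, div_eq_mul_inv]

theorem vortexField_perm_of_pointReflection (σ : Equiv.Perm (Fin n)) (c : ℂ)
    (hκ : ∀ k, κ (σ k) = κ k) (hz : ∀ k, z (σ k) = c - z k) (j : Fin n) :
    vortexField κ z (σ j) = -vortexField κ z j := by
  rw [vortexField_eq_I_mul_conj_sum, vortexField_eq_I_mul_conj_sum, ← Equiv.sum_comp σ]
  simp only [hκ, hz, sub_sub_sub_cancel_left]
  rw [← mul_neg, ← map_neg, ← sum_neg_distrib]
  congr 2
  exact sum_congr rfl fun k _ => by rw [← neg_sub (z j) (z k), div_neg]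

end General

section Parallelogram

variable {a b : ℝ} {w : ℂ}

theorem memDV_parallelogram (h₀ : w ≠ 0) (h₁ : w ≠ 1) (h₂ : w ≠ -1) :
    memDV ![w + 1, w, 1, 0] := by
  intro j k hjk
  fin_cases j <;> fin_cases k <;> simp_all [eq_comm, eq_neg_iff_add_eq_zero]

theorem vortexField_parallelogram :
    vortexField ![a, b, b, a] ![w + 1, w, 1, 0] =
      ![I * conj (b + b / w + a / (w + 1)), I * conj (-a + b / (w - 1) + a / w),
        -(I * conj (-a + b / (w - 1) + a / w)), -(I * conj (b + b / w + a / (w + 1)))] := by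
  have hsymm := vortexField_perm_of_pointReflection (κ := ![a, b, b, a]) (z := ![w + 1, w, 1, 0])
    Fin.revPerm (w + 1) (fun k => by fin_cases k <;> rfl) (fun k => by fin_cases k <;> simp)
  have hV₀ :
      vortexField ![a, b, b, a] ![w + 1, w, 1, 0] 0 = I * conj (b + b / w + a / (w + 1)) := by
    simp [vortexField_eq_I_mul_conj_sum, Fin.sum_univ_four]
  have hV₁ :
      vortexField ![a, b, b, a] ![w + 1, w, 1, 0] 1 = I * conj (-a + b / (w - 1) + a / w) := by
    simp [vortexField_eq_I_mul_conj_sum, Fin.sum_univ_four, div_neg]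
  funext j
  fin_cases j
  · exact hV₀
  · exact hV₁
  · simpa [hV₁] using hsymm 1
  · simpa [hV₀] using hsymm 0

theorem isSelfSimilar_parallelogram
    (h : (b + b / w + a / (w + 1)) * (conj w - 1) =
      (-a + b / (w - 1) + a / w) * (conj w + 1)) :
    IsSelfSimilar ![a, b, b, a] ![w + 1, w, 1, 0] := by
  have key := congrArg (fun x => I * conj x) h
  simp only [map_mul, map_sub, map_add (starRingEnd ℂ) _ 1, map_one, conj_conj,
    ← mul_assoc] at key
  have hV := vortexField_parallelogram (a := a) (b := b) (w := w)
  generalize I * conj (b + b / w + a / (w + 1)) = V₀ at hV key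
  generalize I * conj (-a + b / (w - 1) + a / w) = V₁ at hV key
  refine isSelfSimilar_of_eq_affine (V₀ - V₁) (V₁ - (V₀ - V₁) * w) fun k => ?_
  rw [hV]
  fin_cases k <;> simp only [Fin.zero_eta, Fin.mk_one, Fin.reduceFinMk, Fin.isValue,
    Matrix.cons_val_zero, Matrix.cons_val_one, Matrix.cons_val]
  · ring
  · ring
  · linear_combination key
  · linear_combination key

end Parallelogram

-- `s = √3`, `λ = -(2 + s)`, and `u` stands for `conj w`.
theorem novikov_circle_identity {K : Type*} [Field K] {s w u : K} (hs : s ^ 2 = 3)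
    (hc : (w - s) * (u - s) = 2) (h₀ : w ≠ 0) (h₁ : w - 1 ≠ 0) (h₂ : w + 1 ≠ 0) :
    (-(2 + s) + -(2 + s) / w + 1 / (w + 1)) * (u - 1) =
      (-1 + -(2 + s) / (w - 1) + 1 / w) * (u + 1) := by
  field_simp
  linear_combination (-(2 + s) * (w + 1) ^ 2 + w - (-(2 + s) * w - (w - 1) ^ 2)) * (hc - hs)
    - (w + u) * (w ^ 2 + w + 1) * hs

theorem ne_of_sq_norm_sub_sqrt_three_eq_two {w : ℂ} (hw : ‖w - (Real.sqrt 3 : ℝ)‖ ^ 2 = 2) :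
    w ≠ 0 ∧ w ≠ 1 ∧ w ≠ -1 := by
  have h3 := Real.sq_sqrt (show (0 : ℝ) ≤ 3 by norm_num)
  refine ⟨?_, ?_, ?_⟩ <;> rintro rfl <;>
    simp only [← ofReal_one, ← ofReal_neg, ← ofReal_zero, ← ofReal_sub, norm_real,
      Real.norm_eq_abs, sq_abs] at hw <;>
    nlinarith

/-- for `λ = −(2 + √3)` and the Novikov circulation `κ = (1, λ, λ, 1)`,
every parallelogram system `Z = (w + 1, w, 1, 0)` with `|w − √3|² = 2` lies in `DV`
and is self-similar. -/
theorem novikov_parallelogram_selfSimilar (w : ℂ)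
    (hw : (‖w - (Real.sqrt 3 : ℝ)‖) ^ 2 = 2) :
    memDV (![w + 1, w, 1, 0] : Fin 4 → ℂ) ∧
    ∃ ω : ℂ, ∀ j k : Fin 4,
      vortexField ![1, -(2 + Real.sqrt 3), -(2 + Real.sqrt 3), 1] ![w + 1, w, 1, 0] k -
        vortexField ![1, -(2 + Real.sqrt 3), -(2 + Real.sqrt 3), 1] ![w + 1, w, 1, 0] j =
      ω * ((![w + 1, w, 1, 0] : Fin 4 → ℂ) k - (![w + 1, w, 1, 0] : Fin 4 → ℂ) j) := by
  obtain ⟨h₀, h₁, h₂⟩ := ne_of_sq_norm_sub_sqrt_three_eq_two hw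
  have hs : ((Real.sqrt 3 : ℝ) : ℂ) ^ 2 = 3 := by norm_num [← ofReal_pow]
  have hc : (w - (Real.sqrt 3 : ℝ)) * (conj w - (Real.sqrt 3 : ℝ)) = 2 := by
    have := mul_conj (w - (Real.sqrt 3 : ℝ))
    rwa [map_sub, conj_ofReal, normSq_eq_norm_sq, hw, ofReal_ofNat] at this
  refine ⟨memDV_parallelogram h₀ h₁ h₂, isSelfSimilar_parallelogram ?_⟩
  push_cast
  exact novikov_circle_identity hs hc h₀ (sub_ne_zero.mpr h₁)
    (by rwa [← sub_neg_eq_add, sub_ne_zero])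
end
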